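/- For every n ≥ 1, X̃_n(0) = n!, i.e. the number of generalized tree-like tableaux of size n with half-perimeter n+1 and no off-diagonal point attached to a diagonal point is n!. -/

import Mathlib

/-- Refined counting numbers `Xtab n h p`: `Xtab 1 2 0 = 1`, zero off `(2,0)` at `n = 1`, and
`Xtab n h p = (2n+1-h)·(Xtab (n-1) (h-2) p + Xtab (n-1) (h-1) p) + 2(h-1-n)·Xtab (n-1) (h-1) (p-1)`
for `n ≥ 2`.  `Xtab n h p` counts generalized tree-like tableaux of size `n`, half-perimeter `h`,
with exactly `p` off-diagonal points attached to a diagonal point. -/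
def Xtab : ℕ → ℤ → ℤ → ℤ
  | 0, _, _ => 0
  | 1, h, p => if h = 2 ∧ p = 0 then 1 else 0
  | n + 2, h, p =>
      (2 * ((n : ℤ) + 2) + 1 - h) * (Xtab (n + 1) (h - 2) p + Xtab (n + 1) (h - 1) p)
        + 2 * (h - 1 - ((n : ℤ) + 2)) * Xtab (n + 1) (h - 1) (p - 1)

theorem Xtab_eq_zero_of_lt {n : ℕ} {h : ℤ} (hh : h < n + 1) (p : ℤ) : Xtab n h p = 0 := by
  induction n using Nat.strongRecOn generalizing h p with
  | ind n ih =>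
    match n, ih with
    | 0, _ => rfl
    | 1, _ => simp only [Xtab, ite_eq_right_iff]; omega
    | n + 2, ih =>
      have hlt : ∀ d : ℤ, 1 ≤ d → h - d < ↑(n + 1) + 1 := fun d hd => by push_cast at hh ⊢; omega
      rw [Xtab, ih (n + 1) (by omega) (hlt 2 (by norm_num)), ih (n + 1) (by omega) (hlt 1 le_rfl),
        ih (n + 1) (by omega) (hlt 1 le_rfl)]
      ring

/-- On the minimal half-perimeter only the middle term of the recurrence survives: the first
vanishes below the minimal half-perimeter and the coefficient of the last is zero. -/
theorem Xtab_succ_succ_minimal (n : ℕ) (p : ℤ) :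
    Xtab (n + 2) (n + 3) p = (n + 2) * Xtab (n + 1) (n + 2) p := by
  have hlow : Xtab (n + 1) ((n + 3 : ℤ) - 2) p = 0 := Xtab_eq_zero_of_lt (by push_cast; omega) p
  rw [Xtab, hlow, show (n + 3 : ℤ) - 1 = n + 2 by ring]
  ring

/-- For every n ≥ 1, X̃_n(0) := X_n(n+1, 0) equals n!. -/
theorem stmt10 (n : ℕ) (hn : 1 ≤ n) :
    Xtab n ((n : ℤ) + 1) 0 = (Nat.factorial n : ℤ) := by
  induction n, hn using Nat.le_induction with
  | base => rfl
  | succ n hn ih =>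
    obtain ⟨m, rfl⟩ := Nat.exists_eq_add_of_le' hn
    have hstep := Xtab_succ_succ_minimal m 0
    push_cast at ih ⊢
    rw [show (m : ℤ) + 1 + 1 + 1 = m + 3 by ring, hstep, show (m : ℤ) + 2 = m + 1 + 1 by ring, ih,
      Nat.factorial_succ (m + 1)]
    push_cast
    ring
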